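/- Let Ω ⊆ ℂ be open, f₁ : Ω → ℂ holomorphic with f₁' ≠ 0 on Ω, N := (2Re f₁/(1+|f₁|²), 2Im f₁/(1+|f₁|²), (|f₁|²−1)/(1+|f₁|²)), τ := log(2|f₁'|/(1+|f₁|²)), let ρ : Ω → ℝ be smooth with ρ > 0, and set X := e^{−2τ}(ρ_x N_x + ρ_y N_y) + ρ N. Then ⟨X, X⟩ = ρ² + e^{−2τ}(ρ_x² + ρ_y²) on Ω, and consequently at each point of Ω the middle-sphere relation ⟨X, X⟩ − ρ(e^{−2τ}Δ₀ρ + 2ρ) + 1 = 0 (i.e. ⟨X,X⟩ + (2H/K)⟨X,N⟩ + 1 = 0, using ⟨X,N⟩ = ρ and −2H/K = e^{−2τ}Δ₀ρ + 2ρ) holds if and only if ρ² + e^{−2τ} ρ Δ₀ρ = 1 + e^{−2τ}(ρ_x² + ρ_y²) at that point. -/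

import Mathlib

/-!
`N` is inverse stereographic projection composed with the holomorphic map `f₁`, so it is
conformal: `N_x` and `N_y` are orthogonal, tangent to the sphere at the unit vector `N`, and
both of squared length `(2|f₁'|/(1+|f₁|²))² = e^{2τ}`. Expanding `⟨X, X⟩` in the orthogonal frame
`(N_x, N_y, N)` gives `ρ² + e^{-2τ}(ρ_x² + ρ_y²)`, and the equivalence is a rearrangement.
-/

open scoped RealInnerProductSpace

/-- Partial derivative in the `x`-direction of a function on `ℂ ≅ ℝ²`. -/
noncomputable def pdx (u : ℂ → ℝ) (z : ℂ) : ℝ := fderiv ℝ u z 1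

/-- Partial derivative in the `y`-direction of a function on `ℂ ≅ ℝ²`. -/
noncomputable def pdy (u : ℂ → ℝ) (z : ℂ) : ℝ := fderiv ℝ u z Complex.I

/-- Flat Laplacian `Δ₀u = u_xx + u_yy`. -/
noncomputable def lap (u : ℂ → ℝ) (z : ℂ) : ℝ := pdx (pdx u) z + pdy (pdy u) z

section InvStereographic

variable {F E : Type*} [NormedAddCommGroup F] [InnerProductSpace ℝ F]
  [NormedAddCommGroup E] [InnerProductSpace ℝ E]

/-- Inverse stereographic projection onto the unit sphere from the pole `e`, where `ι` identifies
`F` with the equatorial hyperplane `eᗮ`. -/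
noncomputable def invStereographic (ι : F →ₗᵢ[ℝ] E) (e : E) (w : F) : E :=
  (1 + ‖w‖ ^ 2)⁻¹ • ((2 : ℝ) • ι w + (‖w‖ ^ 2 - 1) • e)

variable {ι : F →ₗᵢ[ℝ] E} {e : E}

lemma inner_invStereographic_self (he : ‖e‖ = 1) (hιe : ∀ u, ⟪ι u, e⟫ = 0) (w : F) :
    ⟪invStereographic ι e w, invStereographic ι e w⟫ = 1 := by
  have hD : (1 : ℝ) + ‖w‖ ^ 2 ≠ 0 := by positivity
  have hιe' (u : F) : ⟪e, ι u⟫ = 0 := by rw [real_inner_comm]; exact hιe u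
  simp only [invStereographic, inner_smul_left, inner_smul_right, inner_add_left, inner_add_right,
    hιe, hιe', ι.inner_map_map, real_inner_self_eq_norm_sq, he, RCLike.conj_to_real]
  field_simp
  ring

lemma hasFDerivAt_invStereographic (ι : F →ₗᵢ[ℝ] E) (e : E) (w : F) :
    HasFDerivAt (invStereographic ι e)
      ((2 / (1 + ‖w‖ ^ 2)) • (ι.toContinuousLinearMap + (innerSL ℝ w).smulRight e
        - (innerSL ℝ w).smulRight (invStereographic ι e w))) w := by
  have hD : (1 : ℝ) + ‖w‖ ^ 2 ≠ 0 := by positivity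
  have hnorm : HasFDerivAt (fun w : F => ‖w‖ ^ 2) (2 • innerSL ℝ w) w := by
    simpa using (hasFDerivAt_id w).norm_sq
  have hinv := (hasDerivAt_inv hD).comp_hasFDerivAt w (hnorm.const_add 1)
  have hvec := ((ι.toContinuousLinearMap.hasFDerivAt (x := w)).const_smul (2 : ℝ)).add
    ((hnorm.sub_const 1).smul_const e)
  convert hinv.smul hvec using 1
  · rfl
  ext v
  simp only [invStereographic, smul_add, smul_apply, sub_apply, add_apply,
    LinearIsometry.coe_toContinuousLinearMap, ContinuousLinearMap.smulRight_apply,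
    coe_innerSL_apply, Function.comp_apply, neg_smul, Pi.add_apply, Pi.smul_apply, nsmul_eq_mul,
    Nat.cast_ofNat, neg_apply, smul_eq_mul]
  match_scalars <;> field_simp
  ring

lemma fderiv_invStereographic_apply (w v : F) :
    fderiv ℝ (invStereographic ι e) w v =
      (2 / (1 + ‖w‖ ^ 2)) • (ι v + ⟪w, v⟫ • e - ⟪w, v⟫ • invStereographic ι e w) := by
  simp [(hasFDerivAt_invStereographic ι e w).fderiv]

lemma inner_invStereographic_fderiv (he : ‖e‖ = 1) (hιe : ∀ u, ⟪ι u, e⟫ = 0) (w v : F) :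
    ⟪invStereographic ι e w, fderiv ℝ (invStereographic ι e) w v⟫ = 0 := by
  have hD : (1 : ℝ) + ‖w‖ ^ 2 ≠ 0 := by positivity
  have hιe' (u : F) : ⟪e, ι u⟫ = 0 := by rw [real_inner_comm]; exact hιe u
  simp only [fderiv_invStereographic_apply, invStereographic, inner_smul_left, inner_smul_right,
    inner_add_left, inner_add_right, inner_sub_right, hιe, hιe', ι.inner_map_map,
    real_inner_self_eq_norm_sq, he, RCLike.conj_to_real]
  field_simp
  ring

lemma inner_fderiv_invStereographic (he : ‖e‖ = 1) (hιe : ∀ u, ⟪ι u, e⟫ = 0) (w u v : F) :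
    ⟪fderiv ℝ (invStereographic ι e) w u, fderiv ℝ (invStereographic ι e) w v⟫ =
      (2 / (1 + ‖w‖ ^ 2)) ^ 2 * ⟪u, v⟫ := by
  have hD : (1 : ℝ) + ‖w‖ ^ 2 ≠ 0 := by positivity
  have hιe' (u : F) : ⟪e, ι u⟫ = 0 := by rw [real_inner_comm]; exact hιe u
  simp only [fderiv_invStereographic_apply, invStereographic, inner_smul_left, inner_smul_right,
    inner_add_left, inner_add_right, inner_sub_left, inner_sub_right, hιe, hιe', ι.inner_map_map,
    real_inner_self_eq_norm_sq, he, RCLike.conj_to_real, real_inner_comm w u]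
  field_simp
  ring

end InvStereographic

lemma HasDerivAt.fderiv_real_comp_apply {E : Type*} [NormedAddCommGroup E] [NormedSpace ℝ E]
    {g : ℂ → E} {f : ℂ → ℂ} {f' z : ℂ} (hg : DifferentiableAt ℝ g (f z)) (hf : HasDerivAt f f' z)
    (v : ℂ) : fderiv ℝ (g ∘ f) z v = fderiv ℝ g (f z) (f' * v) := by
  rw [fderiv_comp z hg (hf.hasFDerivAt.restrictScalars ℝ).differentiableAt,
    (hf.hasFDerivAt.restrictScalars ℝ).fderiv]
  simp [mul_comm]

section Holomorphic

variable {E : Type*} [NormedAddCommGroup E] [InnerProductSpace ℝ E] {ι : ℂ →ₗᵢ[ℝ] E} {e : E}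
  {f : ℂ → ℂ} {d z : ℂ}

lemma HasDerivAt.inner_fderiv_invStereographic_comp (he : ‖e‖ = 1) (hιe : ∀ u, ⟪ι u, e⟫ = 0)
    (hf : HasDerivAt f d z) (u v : ℂ) :
    ⟪fderiv ℝ (invStereographic ι e ∘ f) z u, fderiv ℝ (invStereographic ι e ∘ f) z v⟫ =
      (2 / (1 + ‖f z‖ ^ 2)) ^ 2 * ⟪d * u, d * v⟫ := by
  simp only [hf.fderiv_real_comp_apply (hasFDerivAt_invStereographic ι e _).differentiableAt,
    inner_fderiv_invStereographic he hιe]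

lemma HasDerivAt.inner_invStereographic_fderiv_comp (he : ‖e‖ = 1) (hιe : ∀ u, ⟪ι u, e⟫ = 0)
    (hf : HasDerivAt f d z) (v : ℂ) :
    ⟪invStereographic ι e (f z), fderiv ℝ (invStereographic ι e ∘ f) z v⟫ = 0 := by
  rw [hf.fderiv_real_comp_apply (hasFDerivAt_invStereographic ι e _).differentiableAt,
    inner_invStereographic_fderiv he hιe]

end Holomorphic

lemma real_inner_self_smul_add_smul_add_smul {E : Type*} [NormedAddCommGroup E]
    [InnerProductSpace ℝ E] {n a b : E} {k c : ℝ} (hnn : ⟪n, n⟫ = 1) (hna : ⟪n, a⟫ = 0)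
    (hnb : ⟪n, b⟫ = 0) (hab : ⟪a, b⟫ = 0) (haa : ⟪a, a⟫ = k) (hbb : ⟪b, b⟫ = k)
    (hck : c * k = 1) (p q r : ℝ) :
    ⟪c • (p • a + q • b) + r • n, c • (p • a + q • b) + r • n⟫ = r ^ 2 + c * (p ^ 2 + q ^ 2) := by
  simp only [inner_add_left, inner_add_right, inner_smul_left, inner_smul_right, hnn, hna, hnb,
    hab, haa, hbb, real_inner_comm n a, real_inner_comm n b, real_inner_comm a b,
    RCLike.conj_to_real]
  linear_combination (c * (p ^ 2 + q ^ 2)) * hck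

noncomputable def complexToHorizontalPlane : ℂ →ₗᵢ[ℝ] EuclideanSpace ℝ (Fin 3) where
  toFun w := !₂[w.re, w.im, 0]
  map_add' u v := by ext i; fin_cases i <;> simp
  map_smul' c v := by ext i; fin_cases i <;> simp
  norm_map' w := by
    simp [EuclideanSpace.norm_eq, Fin.sum_univ_three, Complex.norm_def, Complex.normSq_apply, sq]

lemma inner_complexToHorizontalPlane_single_two (u : ℂ) :
    ⟪complexToHorizontalPlane u, EuclideanSpace.single 2 1⟫ = 0 := by
  simp [complexToHorizontalPlane, EuclideanSpace.inner_single_right]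

lemma eq_invStereographic_of_coords {v : EuclideanSpace ℝ (Fin 3)} {w : ℂ}
    (hv : v 0 = 2 * w.re / (1 + ‖w‖ ^ 2) ∧ v 1 = 2 * w.im / (1 + ‖w‖ ^ 2) ∧
      v 2 = (‖w‖ ^ 2 - 1) / (1 + ‖w‖ ^ 2)) :
    v = invStereographic complexToHorizontalPlane (EuclideanSpace.single 2 1) w := by
  obtain ⟨h0, h1, h2⟩ := hv
  ext i
  fin_cases i <;> simp [invStereographic, complexToHorizontalPlane, h0, h1, h2] <;> ring

lemma Real.exp_neg_two_mul_log {t : ℝ} (ht : 0 < t) :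
    Real.exp (-(2 * Real.log t)) = (t ^ 2)⁻¹ := by
  rw [Real.exp_neg, two_mul, Real.exp_add, Real.exp_log ht, sq]

theorem middle_sphere_relation_iff_ribaucour_equation
    (Ω : Set ℂ) (hΩ : IsOpen Ω) (f₁ : ℂ → ℂ)
    (hf₁ : DifferentiableOn ℂ f₁ Ω) (hf₁' : ∀ z ∈ Ω, deriv f₁ z ≠ 0)
    (N : ℂ → EuclideanSpace ℝ (Fin 3))
    (hN : ∀ z ∈ Ω,
      N z 0 = 2 * (f₁ z).re / (1 + ‖f₁ z‖ ^ 2) ∧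
      N z 1 = 2 * (f₁ z).im / (1 + ‖f₁ z‖ ^ 2) ∧
      N z 2 = (‖f₁ z‖ ^ 2 - 1) / (1 + ‖f₁ z‖ ^ 2))
    (τ : ℂ → ℝ)
    (hτ : ∀ z ∈ Ω, τ z =
      Real.log (2 * ‖deriv f₁ z‖ / (1 + ‖f₁ z‖ ^ 2)))
    (ρ : ℂ → ℝ)
    (X : ℂ → EuclideanSpace ℝ (Fin 3))
    (hX : ∀ z ∈ Ω, X z = Real.exp (-(2 * τ z)) •
        (pdx ρ z • fderiv ℝ N z 1 + pdy ρ z • fderiv ℝ N z Complex.I) + ρ z • N z) :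
    ∀ z ∈ Ω,
      ⟪X z, X z⟫ = ρ z ^ 2 + Real.exp (-(2 * τ z)) * (pdx ρ z ^ 2 + pdy ρ z ^ 2) ∧
      ((⟪X z, X z⟫ - ρ z * (Real.exp (-(2 * τ z)) * lap ρ z + 2 * ρ z) + 1 = 0) ↔
        (ρ z ^ 2 + Real.exp (-(2 * τ z)) * ρ z * lap ρ z
          = 1 + Real.exp (-(2 * τ z)) * (pdx ρ z ^ 2 + pdy ρ z ^ 2))) := by
  intro z hz
  set σ := invStereographic complexToHorizontalPlane (EuclideanSpace.single 2 1)
  have he : ‖(EuclideanSpace.single 2 1 : EuclideanSpace ℝ (Fin 3))‖ = 1 := by simp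
  have hιe := inner_complexToHorizontalPlane_single_two
  have hf : HasDerivAt f₁ (deriv f₁ z) z := (hf₁.differentiableAt (hΩ.mem_nhds hz)).hasDerivAt
  have hNσ : N =ᶠ[nhds z] σ ∘ f₁ := by
    filter_upwards [hΩ.mem_nhds hz] with w hw using eq_invStereographic_of_coords (hN w hw)
  have hconf := hf.inner_fderiv_invStereographic_comp he hιe
  have hnormal := hf.inner_invStereographic_fderiv_comp he hιe
  have hfactor : Real.exp (-(2 * τ z)) *
      ((2 / (1 + ‖f₁ z‖ ^ 2)) ^ 2 * ⟪deriv f₁ z * 1, deriv f₁ z * 1⟫) = 1 := by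
    have hd : 0 < ‖deriv f₁ z‖ := norm_pos_iff.mpr (hf₁' z hz)
    rw [hτ z hz, Real.exp_neg_two_mul_log (by positivity), mul_one, real_inner_self_eq_norm_sq]
    field_simp
  have hXX : ⟪X z, X z⟫ = ρ z ^ 2 + Real.exp (-(2 * τ z)) * (pdx ρ z ^ 2 + pdy ρ z ^ 2) := by
    rw [hX z hz, hNσ.fderiv_eq, hNσ.eq_of_nhds]
    refine real_inner_self_smul_add_smul_add_smul (inner_invStereographic_self he hιe _)
      (hnormal 1) (hnormal Complex.I) ?_ (hconf 1 1) ?_ hfactor _ _ _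
    · simp [hconf, Complex.inner, Complex.mul_re, mul_comm]
    · simp only [hconf, real_inner_self_eq_norm_sq, norm_mul, Complex.norm_I, norm_one]
  refine ⟨hXX, ?_⟩
  rw [hXX]
  constructor <;> intro h <;> linear_combination -h
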